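/- arXiv:1912.08599 — 2 statements merged into one kernel-verified Lean document; each statement's English description precedes it below -/
import Mathlib

section
/- Let t0 < T be real numbers, θ ∈ (0,1), 0 < μ < 1, γ > 0, b > 0, x0 ∈ ℝ, and let f : [t0,T] × ℝ → ℝ be continuous and satisfy the Lipschitz condition |f(t,y1) − f(t,y2)| ≤ A|y1 − y2| for all t ∈ [t0,T] and y1, y2 ∈ ℝ, where A > 0. If C1(T,A) < 1, then there exists a unique continuous function x : [t0,T] → ℝ such that x(t) = x0 + (I^{θ,μ,γ}(f(·, x(·))))(t) for all t ∈ [t0,T]; in particular x(t0) = x0. -/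
open Real MeasureTheory Set

/-- Generalized binomial coefficient `C(γ, i) = γ(γ-1)⋯(γ-i+1)/i!`. -/
noncomputable def genBinom (γ : ℝ) (i : ℕ) : ℝ :=
  (∏ j ∈ Finset.range i, (γ - j)) / (Nat.factorial i : ℝ)

/-- Rising factorial `(ρ)_k = ρ(ρ+1)⋯(ρ+k-1)`. -/
noncomputable def risingFac (ρ : ℝ) (k : ℕ) : ℝ :=
  ∏ j ∈ Finset.range k, (ρ + j)

/-- Generalized Mittag-Leffler function `E_{θ,β}^ρ(λ, z)`
(terms with `Γ` at a pole vanish since `Real.Gamma` is `0` there). -/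
noncomputable def mittagLeffler (θ β ρ lam z : ℝ) : ℝ :=
  ∑' k : ℕ, lam ^ k * z ^ ((k : ℝ) * θ + β - 1) * risingFac ρ k /
    (Real.Gamma ((k : ℝ) * θ + β) * (Nat.factorial k : ℝ))

/-- Generalized AB fractional integral `(I^{θ,μ,γ} η)(t)` starting at `t0`,
with normalization constant `b = B(θ) > 0`. -/
noncomputable def ABIntegral (t0 b θ μ γ : ℝ) (η : ℝ → ℝ) (t : ℝ) : ℝ :=
  ∑' i : ℕ, genBinom γ i * θ ^ i /
      (b * (1 - θ) ^ ((i : ℝ) - 1) * Real.Gamma ((i : ℝ) * θ + 1 - μ)) *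
    ∫ s in t0..t, (t - s) ^ ((i : ℝ) * θ - μ) * η s

/-- Generalized ABC fractional derivative `(D^{θ,μ,γ} f)(t)` starting at `t0`,
with `λ = -θ/(1-θ)` and normalization constant `b = B(θ) > 0`. -/
noncomputable def ABCDeriv (t0 b θ μ γ : ℝ) (f : ℝ → ℝ) (t : ℝ) : ℝ :=
  (b / (1 - θ)) * ∫ s in t0..t, mittagLeffler θ μ γ (-θ / (1 - θ)) (t - s) * deriv f s

/-- Generalized ABR fractional derivative `(R^{θ,μ,γ} f)(t)` starting at `t0`. -/
noncomputable def ABRDeriv (t0 b θ μ γ : ℝ) (f : ℝ → ℝ) (t : ℝ) : ℝ :=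
  (b / (1 - θ)) *
    deriv (fun u => ∫ s in t0..u, mittagLeffler θ μ γ (-θ / (1 - θ)) (u - s) * f s) t

/-- The contraction constant `C1(T, A)` (case `μ ≠ 1`). -/
noncomputable def C1const (t0 T b θ μ γ A : ℝ) : ℝ :=
  (A / b) * ∑' i : ℕ, |genBinom γ i| * θ ^ i * (T - t0) ^ ((i : ℝ) * θ + 1 - μ) /
    ((1 - θ) ^ ((i : ℝ) - 1) * Real.Gamma ((i : ℝ) * θ + 2 - μ))

/-- The contraction constant `C2(T, A)` (case `μ = 1`). -/
noncomputable def C2const (t0 T b θ γ A : ℝ) : ℝ :=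
  (A / b) * ((1 - θ) +
    ∑' i : ℕ, |genBinom γ (i + 1)| * θ ^ (i + 1) * (T - t0) ^ (((i : ℝ) + 1) * θ) /
      ((1 - θ) ^ (i : ℕ) * Real.Gamma (((i : ℝ) + 1) * θ + 1)))

/-- The operator `Υ` in the case `μ = 1`, whose `i = 0` term reduces to `((1-θ)/b) f(t, x(t))`. -/
noncomputable def UpsilonMuOne (t0 b θ γ x0 : ℝ) (f : ℝ → ℝ → ℝ) (x : ℝ → ℝ) (t : ℝ) : ℝ :=
  x0 + ((1 - θ) / b) * f t (x t) +
    ∑' i : ℕ, genBinom γ (i + 1) * θ ^ (i + 1) /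
        (b * (1 - θ) ^ (i : ℕ) * Real.Gamma (((i : ℝ) + 1) * θ)) *
      ∫ s in t0..t, (t - s) ^ (((i : ℝ) + 1) * θ - 1) * f s (x s)

/-! The map `x ↦ x0 + I(f(·, x(·)))` is a contraction of `C([t0, T])` with constant `C1(T, A)`.
The `i`-th term of the series defining `I` is a Riemann–Liouville integral with kernel
`(t - s) ^ (iθ - μ)`, so it is bounded by `(M / b) * |C(γ,i)| θ^i (T-t0)^(iθ+1-μ) /
((1-θ)^(i-1) Γ(iθ+2-μ))` when `|η| ≤ M`; these bounds are summable by the ratio test, because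
log-convexity of `Γ` gives `Γ(x + θ) ≥ (x + θ - 1)^θ Γ(x)`. The same bounds give continuity of
`I η` (uniform convergence) and the Lipschitz estimate, and Banach's fixed point theorem concludes.
-/

open Filter

theorem Real.rpow_mul_Gamma_le_Gamma_add {x θ : ℝ} (hθ0 : 0 < θ) (hθ1 : θ < 1)
    (hx : 1 < x + θ) : (x + θ - 1) ^ θ * Gamma x ≤ Gamma (x + θ) := by
  have hu : 0 < x + θ - 1 := by linarith
  have hconv := Gamma_mul_add_mul_le_rpow_Gamma_mul_rpow_Gamma hu (by linarith : 0 < x + θ)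
    hθ0 (by linarith : 0 < 1 - θ) (by ring)
  rw [show θ * (x + θ - 1) + (1 - θ) * (x + θ) = x by ring] at hconv
  have hrec : Gamma (x + θ) = (x + θ - 1) * Gamma (x + θ - 1) := by
    rw [← Gamma_add_one hu.ne']; ring_nf
  have hΓ : 0 < Gamma (x + θ) := Gamma_pos_of_pos (by linarith)
  calc (x + θ - 1) ^ θ * Gamma x
      ≤ (x + θ - 1) ^ θ * (Gamma (x + θ - 1) ^ θ * Gamma (x + θ) ^ (1 - θ)) := by gcongr
    _ = Gamma (x + θ) ^ θ * Gamma (x + θ) ^ (1 - θ) := by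
      rw [← mul_assoc, ← mul_rpow hu.le (Gamma_pos_of_pos hu).le, ← hrec]
    _ = Gamma (x + θ) := by rw [← rpow_add hΓ]; simp

theorem genBinom_succ (γ : ℝ) (i : ℕ) :
    genBinom γ (i + 1) = genBinom γ i * ((γ - i) / (i + 1)) := by
  simp only [genBinom, Finset.prod_range_succ, Nat.factorial_succ]
  push_cast
  field_simp

theorem abs_genBinom_succ_le (γ : ℝ) (i : ℕ) :
    |genBinom γ (i + 1)| ≤ (|γ| + 1) * |genBinom γ i| := by
  have hi : (0 : ℝ) < i + 1 := by positivity
  have hquot : |(γ - i) / (i + 1)| ≤ |γ| + 1 := by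
    rw [abs_div, abs_of_pos hi, div_le_iff₀ hi]
    have := abs_sub γ (i : ℝ)
    rw [Nat.abs_cast] at this
    nlinarith [abs_nonneg γ, (Nat.cast_nonneg i : (0 : ℝ) ≤ i)]
  rw [genBinom_succ, abs_mul, mul_comm (|γ| + 1)]
  exact mul_le_mul_of_nonneg_left hquot (abs_nonneg _)

noncomputable def c1Summand (t0 T θ μ γ : ℝ) (i : ℕ) : ℝ :=
  |genBinom γ i| * θ ^ i * (T - t0) ^ ((i : ℝ) * θ + 1 - μ) /
    ((1 - θ) ^ ((i : ℝ) - 1) * Real.Gamma ((i : ℝ) * θ + 2 - μ))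

theorem C1const_eq_mul_tsum (t0 T b θ μ γ A : ℝ) :
    C1const t0 T b θ μ γ A = A / b * ∑' i, c1Summand t0 T θ μ γ i := rfl

section C1Summand

variable {t0 T θ μ : ℝ}

theorem c1Summand_nonneg (γ : ℝ) (htT : t0 ≤ T) (hθ0 : 0 ≤ θ) (hθ1 : θ < 1) (hμ : μ < 1)
    (i : ℕ) : 0 ≤ c1Summand t0 T θ μ γ i := by
  have : 0 ≤ (i : ℝ) * θ := by positivity
  have : 0 < Real.Gamma ((i : ℝ) * θ + 2 - μ) := Real.Gamma_pos_of_pos (by linarith)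
  have : (0 : ℝ) ≤ T - t0 := sub_nonneg.2 htT
  have : (0 : ℝ) < 1 - θ := sub_pos.2 hθ1
  unfold c1Summand
  positivity

theorem c1Summand_succ_le (γ : ℝ) (htT : t0 ≤ T) (hθ0 : 0 < θ) (hθ1 : θ < 1) (hμ : μ < 1)
    (i : ℕ) :
    c1Summand t0 T θ μ γ (i + 1) ≤
      (|γ| + 1) * θ * (T - t0) ^ θ / ((1 - θ) * ((i + 1) * θ + 1 - μ) ^ θ) *
        c1Summand t0 T θ μ γ i := by
  have hL : (0 : ℝ) ≤ T - t0 := sub_nonneg.2 htT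
  have hθ' : (0 : ℝ) < 1 - θ := sub_pos.2 hθ1
  have hiθ : 0 ≤ (i : ℝ) * θ := by positivity
  have hq : (0 : ℝ) < (i + 1) * θ + 1 - μ := by linarith
  have hΓ : 0 < Real.Gamma (i * θ + 2 - μ) := Real.Gamma_pos_of_pos (by linarith)
  have hnum : |genBinom γ (i + 1)| * θ ^ (i + 1) * (T - t0) ^ (((i + 1 : ℕ) : ℝ) * θ + 1 - μ)
      ≤ (|γ| + 1) * θ * (T - t0) ^ θ *
        (|genBinom γ i| * θ ^ i * (T - t0) ^ ((i : ℝ) * θ + 1 - μ)) := by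
    rw [show ((i + 1 : ℕ) : ℝ) * θ + 1 - μ = (i * θ + 1 - μ) + θ by push_cast; ring,
      Real.rpow_add' hL (by linarith), pow_succ]
    have := abs_genBinom_succ_le γ i
    have : 0 ≤ (T - t0) ^ (i * θ + 1 - μ) := by positivity
    have : 0 ≤ (T - t0) ^ θ := by positivity
    calc _ ≤ ((|γ| + 1) * |genBinom γ i|) * (θ ^ i * θ) *
          ((T - t0) ^ (i * θ + 1 - μ) * (T - t0) ^ θ) := by gcongr
      _ = _ := by ring
  have hden : (1 - θ) * ((i + 1) * θ + 1 - μ) ^ θ *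
        ((1 - θ) ^ ((i : ℝ) - 1) * Real.Gamma (i * θ + 2 - μ))
      ≤ (1 - θ) ^ (((i + 1 : ℕ) : ℝ) - 1) * Real.Gamma (((i + 1 : ℕ) : ℝ) * θ + 2 - μ) := by
    have hG := Real.rpow_mul_Gamma_le_Gamma_add (x := i * θ + 2 - μ) hθ0 hθ1 (by linarith)
    rw [show (i : ℝ) * θ + 2 - μ + θ - 1 = (i + 1) * θ + 1 - μ by ring] at hG
    rw [show ((i + 1 : ℕ) : ℝ) - 1 = ((i : ℝ) - 1) + 1 by push_cast; ring,
      Real.rpow_add hθ', Real.rpow_one,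
      show ((i + 1 : ℕ) : ℝ) * θ + 2 - μ = i * θ + 2 - μ + θ by push_cast; ring]
    calc _ = (1 - θ) ^ ((i : ℝ) - 1) * (1 - θ) *
          (((i + 1) * θ + 1 - μ) ^ θ * Real.Gamma (i * θ + 2 - μ)) := by ring
      _ ≤ _ := by gcongr
  unfold c1Summand
  rw [div_mul_div_comm]
  exact div_le_div₀ (by positivity) hnum (by positivity) hden

theorem summable_c1Summand (γ : ℝ) (htT : t0 ≤ T) (hθ0 : 0 < θ) (hθ1 : θ < 1) (hμ : μ < 1) :
    Summable (c1Summand t0 T θ μ γ) := by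
  set c := (|γ| + 1) * θ * (T - t0) ^ θ / (1 - θ)
  have hθ' : (0 : ℝ) < 1 - θ := sub_pos.2 hθ1
  have hgrowth : Tendsto (fun i : ℕ => (((i : ℝ) + 1) * θ + 1 - μ) ^ θ) atTop atTop := by
    refine (tendsto_rpow_atTop hθ0).comp (tendsto_atTop_add_const_right _ _ ?_)
    refine tendsto_atTop_add_const_right _ _ ?_
    exact (tendsto_natCast_atTop_atTop.atTop_add tendsto_const_nhds).atTop_mul_const hθ0
  refine summable_of_ratio_norm_eventually_le (r := 1 / 2) (by norm_num) ?_
  filter_upwards [hgrowth.eventually_ge_atTop (2 * c)] with i hi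
  have hpos : 0 < (((i : ℝ) + 1) * θ + 1 - μ) ^ θ := by
    have : (0 : ℝ) ≤ i := i.cast_nonneg
    apply Real.rpow_pos_of_pos
    nlinarith
  have hratio : (|γ| + 1) * θ * (T - t0) ^ θ / ((1 - θ) * ((i + 1) * θ + 1 - μ) ^ θ) ≤ 1 / 2 := by
    rw [← div_div, div_le_iff₀ hpos]
    linarith
  rw [Real.norm_of_nonneg (c1Summand_nonneg γ htT hθ0.le hθ1 hμ _),
    Real.norm_of_nonneg (c1Summand_nonneg γ htT hθ0.le hθ1 hμ _)]
  exact (c1Summand_succ_le γ htT hθ0 hθ1 hμ i).trans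
    (mul_le_mul_of_nonneg_right hratio (c1Summand_nonneg γ htT hθ0.le hθ1 hμ _))

end C1Summand

section RiemannLiouvilleKernel

variable {t0 t T e : ℝ} {η : ℝ → ℝ}

theorem intervalIntegrable_sub_rpow (a b c : ℝ) (he : -1 < e) :
    IntervalIntegrable (fun s => (c - s) ^ e) volume a b := by
  simpa using
    (intervalIntegral.intervalIntegrable_rpow' he (a := c - a) (b := c - b)).comp_sub_left c

theorem integral_sub_rpow (he : -1 < e) :
    ∫ s in t0..t, (t - s) ^ e = (t - t0) ^ (e + 1) / (e + 1) := by
  rw [intervalIntegral.integral_comp_sub_left (fun u => u ^ e) t, integral_rpow (Or.inl he),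
    sub_self, Real.zero_rpow (by linarith : e + 1 ≠ 0)]
  ring

theorem abs_integral_sub_rpow_mul_le {M : ℝ} (hle : t0 ≤ t) (he : -1 < e)
    (hη : ∀ s ∈ Ioc t0 t, |η s| ≤ M) :
    |∫ s in t0..t, (t - s) ^ e * η s| ≤ M * (t - t0) ^ (e + 1) / (e + 1) := by
  rw [← Real.norm_eq_abs]
  calc ‖∫ s in t0..t, (t - s) ^ e * η s‖ ≤ ∫ s in t0..t, (t - s) ^ e * M :=
        intervalIntegral.norm_integral_le_of_norm_le hle (ae_of_all _ fun s hs => ?_)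
          ((intervalIntegrable_sub_rpow _ _ _ he).mul_const M)
    _ = M * (t - t0) ^ (e + 1) / (e + 1) := by
      rw [intervalIntegral.integral_mul_const, integral_sub_rpow he]; ring
  have hker : 0 ≤ (t - s) ^ e := Real.rpow_nonneg (by linarith [hs.2]) _
  rw [norm_mul, Real.norm_of_nonneg hker]
  exact mul_le_mul_of_nonneg_left (hη s hs) hker

theorem integral_sub_rpow_mul_eq_rescaled (hle : t0 ≤ t) (he : -1 < e) (η : ℝ → ℝ) :
    ∫ s in t0..t, (t - s) ^ e * η s =
      (t - t0) ^ (e + 1) * ∫ v in (0 : ℝ)..1, (1 - v) ^ e * η (t0 + (t - t0) * v) := by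
  rcases hle.eq_or_lt with rfl | hlt
  · simp [Real.zero_rpow (by linarith : e + 1 ≠ 0)]
  have hL : 0 < t - t0 := sub_pos.2 hlt
  have hsub := intervalIntegral.integral_comp_mul_add (a := 0) (b := 1)
    (fun s => (t - s) ^ e * η s) hL.ne' t0
  have hpull : ∫ v in (0 : ℝ)..1, (t - ((t - t0) * v + t0)) ^ e * η ((t - t0) * v + t0) =
      (t - t0) ^ e * ∫ v in (0 : ℝ)..1, (1 - v) ^ e * η (t0 + (t - t0) * v) := by
    rw [← intervalIntegral.integral_const_mul]
    refine intervalIntegral.integral_congr fun v hv => ?_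
    rw [uIcc_of_le zero_le_one] at hv
    rw [show t - ((t - t0) * v + t0) = (t - t0) * (1 - v) by ring,
      Real.mul_rpow hL.le (by linarith [hv.2]), add_comm _ t0]
    ring
  simp only [mul_zero, zero_add, mul_one, sub_add_cancel, smul_eq_mul, hpull] at hsub
  rw [Real.rpow_add_one hL.ne', mul_comm _ (t - t0), mul_assoc, hsub]
  field_simp

theorem continuousOn_integral_sub_rpow_mul (he : -1 < e) (hη : ContinuousOn η (Icc t0 T)) :
    ContinuousOn (fun t => ∫ s in t0..t, (t - s) ^ e * η s) (Icc t0 T) := by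
  -- After `s = t0 + (t - t0) * v` the singularity sits at the fixed point `v = 1`, so
  -- `(1 - v) ^ e * sup |η|` dominates the integrand uniformly in `t`.
  obtain ⟨M, hM⟩ := isCompact_Icc.exists_bound_of_continuousOn hη
  have hmaps : ∀ v ∈ Icc (0 : ℝ) 1,
      MapsTo (fun t => t0 + (t - t0) * v) (Icc t0 T) (Icc t0 T) := fun v hv t ht =>
    ⟨by nlinarith [hv.1, ht.1], by nlinarith [hv.1, hv.2, ht.1, ht.2]⟩
  have hrescaled : ContinuousOn
      (fun t => ∫ v in (0 : ℝ)..1, (1 - v) ^ e * η (t0 + (t - t0) * v)) (Icc t0 T) := by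
    intro t ht
    refine intervalIntegral.continuousWithinAt_of_dominated_interval
      (bound := fun v => (1 - v) ^ e * M) ?_ ?_
      ((intervalIntegrable_sub_rpow _ _ _ he).mul_const M) ?_
    · filter_upwards [self_mem_nhdsWithin] with t' ht'
      refine ((intervalIntegrable_sub_rpow _ _ _ he).mul_continuousOn
        (hη.comp (by fun_prop) fun v hv => ?_)).def'.aestronglyMeasurable
      exact hmaps v (by simpa using hv) ht'
    · filter_upwards [self_mem_nhdsWithin] with t' ht'
      refine ae_of_all _ fun v hv => ?_
      rw [uIoc_of_le zero_le_one] at hv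
      have hker : 0 ≤ (1 - v) ^ e := Real.rpow_nonneg (by linarith [hv.2]) _
      rw [norm_mul, Real.norm_of_nonneg hker]
      exact mul_le_mul_of_nonneg_left (hM _ (hmaps v (Ioc_subset_Icc_self hv) ht')) hker
    · refine ae_of_all _ fun v hv => ?_
      rw [uIoc_of_le zero_le_one] at hv
      exact continuousWithinAt_const.mul
        ((hη.comp (by fun_prop) (hmaps v (Ioc_subset_Icc_self hv))) t ht)
  have hpow : ContinuousOn (fun t : ℝ => (t - t0) ^ (e + 1)) (Icc t0 T) :=
    (continuousOn_id.sub continuousOn_const).rpow_const fun _ _ => Or.inr (by linarith)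
  exact (hpow.mul hrescaled).congr fun t ht => integral_sub_rpow_mul_eq_rescaled ht.1 he η

end RiemannLiouvilleKernel

noncomputable def abTerm (t0 b θ μ γ : ℝ) (η : ℝ → ℝ) (i : ℕ) (t : ℝ) : ℝ :=
  genBinom γ i * θ ^ i / (b * (1 - θ) ^ ((i : ℝ) - 1) * Real.Gamma ((i : ℝ) * θ + 1 - μ)) *
    ∫ s in t0..t, (t - s) ^ ((i : ℝ) * θ - μ) * η s

section ABIntegral

variable {t0 T b θ μ γ t M : ℝ} {η : ℝ → ℝ}

theorem ABIntegral_eq_tsum_abTerm :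
    ABIntegral t0 b θ μ γ η t = ∑' i, abTerm t0 b θ μ γ η i t := rfl

@[simp]
theorem ABIntegral_self : ABIntegral t0 b θ μ γ η t0 = 0 := by
  simp [ABIntegral]

theorem abs_abTerm_le (hb : 0 < b) (hθ0 : 0 ≤ θ) (hθ1 : θ < 1) (hμ : μ < 1)
    (ht : t ∈ Icc t0 T) (hη : ∀ s ∈ Icc t0 T, |η s| ≤ M) (i : ℕ) :
    |abTerm t0 b θ μ γ η i t| ≤ M / b * c1Summand t0 T θ μ γ i := by
  have hp : 0 < (i : ℝ) * θ + 1 - μ := by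
    have : 0 ≤ (i : ℝ) * θ := by positivity
    linarith
  have hM : 0 ≤ M := (abs_nonneg _).trans (hη t0 ⟨le_rfl, ht.1.trans ht.2⟩)
  have hden : 0 < b * (1 - θ) ^ ((i : ℝ) - 1) * Real.Gamma ((i : ℝ) * θ + 1 - μ) :=
    mul_pos (mul_pos hb (Real.rpow_pos_of_pos (sub_pos.2 hθ1) _)) (Real.Gamma_pos_of_pos hp)
  have hintegral : |∫ s in t0..t, (t - s) ^ ((i : ℝ) * θ - μ) * η s| ≤
      M * (T - t0) ^ ((i : ℝ) * θ + 1 - μ) / ((i : ℝ) * θ + 1 - μ) := by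
    refine (abs_integral_sub_rpow_mul_le ht.1 (by linarith)
      fun s hs => hη s ⟨hs.1.le, hs.2.trans ht.2⟩).trans ?_
    rw [show (i : ℝ) * θ - μ + 1 = i * θ + 1 - μ by ring]
    gcongr
    · linarith [ht.1]
    · exact ht.2
  have hΓsucc : Real.Gamma ((i : ℝ) * θ + 2 - μ) =
      ((i : ℝ) * θ + 1 - μ) * Real.Gamma ((i : ℝ) * θ + 1 - μ) := by
    rw [← Real.Gamma_add_one hp.ne']; ring_nf
  calc |abTerm t0 b θ μ γ η i t|
      = |genBinom γ i| * θ ^ i / (b * (1 - θ) ^ ((i : ℝ) - 1) * Real.Gamma (i * θ + 1 - μ)) *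
          |∫ s in t0..t, (t - s) ^ ((i : ℝ) * θ - μ) * η s| := by
        rw [abTerm, abs_mul, abs_div, abs_mul, abs_of_nonneg (pow_nonneg hθ0 i), abs_of_pos hden]
    _ ≤ |genBinom γ i| * θ ^ i / (b * (1 - θ) ^ ((i : ℝ) - 1) * Real.Gamma (i * θ + 1 - μ)) *
          (M * (T - t0) ^ ((i : ℝ) * θ + 1 - μ) / ((i : ℝ) * θ + 1 - μ)) := by gcongr
    _ = M / b * c1Summand t0 T θ μ γ i := by
        rw [c1Summand, hΓsucc]
        field_simp

theorem summable_abTerm (hb : 0 < b) (hθ0 : 0 < θ) (hθ1 : θ < 1) (hμ : μ < 1)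
    (hη : ContinuousOn η (Icc t0 T)) (ht : t ∈ Icc t0 T) :
    Summable fun i => abTerm t0 b θ μ γ η i t := by
  obtain ⟨M, hM⟩ := isCompact_Icc.exists_bound_of_continuousOn hη
  exact ((summable_c1Summand γ (ht.1.trans ht.2) hθ0 hθ1 hμ).mul_left (M / b)).of_norm_bounded
    fun i => abs_abTerm_le hb hθ0.le hθ1 hμ ht hM i

theorem abs_ABIntegral_le (hb : 0 < b) (hθ0 : 0 < θ) (hθ1 : θ < 1) (hμ : μ < 1)
    (ht : t ∈ Icc t0 T) (hη : ∀ s ∈ Icc t0 T, |η s| ≤ M) :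
    |ABIntegral t0 b θ μ γ η t| ≤ C1const t0 T b θ μ γ M := by
  rw [ABIntegral_eq_tsum_abTerm, C1const_eq_mul_tsum, ← tsum_mul_left]
  exact tsum_of_norm_bounded (f := fun i => abTerm t0 b θ μ γ η i t)
    ((summable_c1Summand γ (ht.1.trans ht.2) hθ0 hθ1 hμ).mul_left (M / b)).hasSum
    fun i => abs_abTerm_le hb hθ0.le hθ1 hμ ht hη i

theorem continuousOn_ABIntegral (hb : 0 < b) (hθ0 : 0 < θ) (hθ1 : θ < 1) (hμ : μ < 1)
    (hη : ContinuousOn η (Icc t0 T)) :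
    ContinuousOn (ABIntegral t0 b θ μ γ η) (Icc t0 T) := by
  rcases (Icc t0 T).eq_empty_or_nonempty with hI | ⟨t, ht⟩
  · simp [hI]
  obtain ⟨M, hM⟩ := isCompact_Icc.exists_bound_of_continuousOn hη
  refine continuousOn_tsum (fun i => continuousOn_const.mul
      (continuousOn_integral_sub_rpow_mul ?_ hη))
    ((summable_c1Summand γ (ht.1.trans ht.2) hθ0 hθ1 hμ).mul_left (M / b))
    fun i t ht => abs_abTerm_le hb hθ0.le hθ1 hμ ht hM i
  have : 0 ≤ (i : ℝ) * θ := by positivity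
  linarith

theorem ABIntegral_sub {η₁ η₂ : ℝ → ℝ} (hb : 0 < b) (hθ0 : 0 < θ) (hθ1 : θ < 1) (hμ : μ < 1)
    (hη₁ : ContinuousOn η₁ (Icc t0 T)) (hη₂ : ContinuousOn η₂ (Icc t0 T)) (ht : t ∈ Icc t0 T) :
    ABIntegral t0 b θ μ γ (fun s => η₁ s - η₂ s) t =
      ABIntegral t0 b θ μ γ η₁ t - ABIntegral t0 b θ μ γ η₂ t := by
  rw [ABIntegral_eq_tsum_abTerm, ABIntegral_eq_tsum_abTerm, ABIntegral_eq_tsum_abTerm,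
    ← (summable_abTerm hb hθ0 hθ1 hμ hη₁ ht).tsum_sub (summable_abTerm hb hθ0 hθ1 hμ hη₂ ht)]
  congr 1 with i
  have he : -1 < (i : ℝ) * θ - μ := by
    have : 0 ≤ (i : ℝ) * θ := by positivity
    linarith
  have hsub : uIcc t0 t ⊆ Icc t0 T := by
    rw [uIcc_of_le ht.1]; exact Icc_subset_Icc_right ht.2
  simp only [abTerm]
  rw [← mul_sub, ← intervalIntegral.integral_sub
    ((intervalIntegrable_sub_rpow _ _ _ he).mul_continuousOn (hη₁.mono hsub))
    ((intervalIntegrable_sub_rpow _ _ _ he).mul_continuousOn (hη₂.mono hsub))]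
  simp only [mul_sub]

end ABIntegral

theorem exists_unique_continuousOn_Icc_fixedPoint {a c K : ℝ} (hac : a ≤ c) (hK : K < 1)
    (Ψ : (ℝ → ℝ) → ℝ → ℝ)
    (hcont : ∀ x, ContinuousOn x (Icc a c) → ContinuousOn (Ψ x) (Icc a c))
    (hlip : ∀ x y, ContinuousOn x (Icc a c) → ContinuousOn y (Icc a c) → ∀ d,
      (∀ s ∈ Icc a c, |x s - y s| ≤ d) → ∀ t ∈ Icc a c, |Ψ x t - Ψ y t| ≤ K * d) :
    ∃ x, ContinuousOn x (Icc a c) ∧ EqOn (Ψ x) x (Icc a c) ∧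
      ∀ y, ContinuousOn y (Icc a c) → EqOn (Ψ y) y (Icc a c) → EqOn y x (Icc a c) := by
  have hext : ∀ z : C(Icc a c, ℝ), ContinuousOn (IccExtend hac z) (Icc a c) := fun z =>
    (continuous_IccExtend_iff.2 z.continuous).continuousOn
  -- the case `d = 0` of `hlip`: `Ψ x` on `[a, c]` only sees `x` on `[a, c]`
  have hlocal : ∀ (z : C(Icc a c, ℝ)) y, ContinuousOn y (Icc a c) →
      (∀ t : Icc a c, y t = z t) → EqOn (Ψ y) (Ψ (IccExtend hac z)) (Icc a c) := by
    intro z y hy hyz t ht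
    refine eq_of_abs_sub_nonpos
      ((hlip y _ hy (hext z) 0 (fun s hs => ?_) t ht).trans_eq (mul_zero K))
    rw [IccExtend_of_mem hac z hs, hyz ⟨s, hs⟩, sub_self, abs_zero]
  let Φ : C(Icc a c, ℝ) → C(Icc a c, ℝ) := fun z =>
    ⟨(Icc a c).domRestrict (Ψ (IccExtend hac z)), (hcont _ (hext z)).domRestrict⟩
  have hΦ : ContractingWith K.toNNReal Φ := by
    refine ⟨by rwa [← NNReal.coe_lt_coe, Real.coe_toNNReal', NNReal.coe_one, max_lt_iff,
      and_iff_left zero_lt_one], LipschitzWith.of_dist_le_mul fun z w => ?_⟩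
    refine (ContinuousMap.dist_le (by positivity)).2 fun t => ?_
    refine (hlip _ _ (hext z) (hext w) (dist z w) (fun s hs => ?_) t t.2).trans ?_
    · rw [IccExtend_of_mem hac z hs, IccExtend_of_mem hac w hs, ← Real.dist_eq]
      exact ContinuousMap.dist_apply_le_dist _
    · exact mul_le_mul_of_nonneg_right (Real.le_coe_toNNReal K) dist_nonneg
  obtain ⟨z, hz, hzuniq⟩ : ∃ z, Φ z = z ∧ ∀ w, Φ w = w → w = z :=
    ⟨_, ContractingWith.fixedPoint_isFixedPt hΦ, fun _ => ContractingWith.fixedPoint_unique hΦ⟩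
  refine ⟨IccExtend hac z, hext z, fun t ht => ?_, fun y hy hfix t ht => ?_⟩
  · rw [IccExtend_of_mem hac z ht]
    exact DFunLike.congr_fun hz ⟨t, ht⟩
  · let y' : C(Icc a c, ℝ) := ⟨(Icc a c).domRestrict y, hy.domRestrict⟩
    have hy' : Φ y' = y' := ContinuousMap.ext fun s =>
      ((hlocal y' y hy (fun _ => rfl) s.2).symm.trans (hfix s.2))
    rw [IccExtend_of_mem hac z ht, ← hzuniq y' hy']
    rfl

theorem existence_uniqueness_mu_ne_one_general
    (t0 T θ μ γ b A x0 : ℝ) (htT : t0 < T) (hθ0 : 0 < θ) (hθ1 : θ < 1)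
    (hμ1 : μ < 1) (hb : 0 < b)
    (f : ℝ → ℝ → ℝ)
    (hfc : ContinuousOn (fun p : ℝ × ℝ => f p.1 p.2) (Set.Icc t0 T ×ˢ Set.univ))
    (hLip : ∀ t ∈ Set.Icc t0 T, ∀ y1 y2 : ℝ, |f t y1 - f t y2| ≤ A * |y1 - y2|)
    (hC1 : C1const t0 T b θ μ γ A < 1) :
    ∃ x : ℝ → ℝ, ContinuousOn x (Set.Icc t0 T) ∧
      (∀ t ∈ Set.Icc t0 T, x t = x0 + ABIntegral t0 b θ μ γ (fun s => f s (x s)) t) ∧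
      x t0 = x0 ∧
      (∀ y : ℝ → ℝ, ContinuousOn y (Set.Icc t0 T) →
        (∀ t ∈ Set.Icc t0 T, y t = x0 + ABIntegral t0 b θ μ γ (fun s => f s (y s)) t) →
        ∀ t ∈ Set.Icc t0 T, y t = x t) := by
  have ht0 : t0 ∈ Icc t0 T := left_mem_Icc.2 htT.le
  have hA : 0 ≤ A := by simpa using (abs_nonneg _).trans (hLip t0 ht0 1 0)
  have hfx : ∀ x, ContinuousOn x (Icc t0 T) → ContinuousOn (fun s => f s (x s)) (Icc t0 T) :=
    fun x hx => hfc.comp (continuousOn_id.prodMk hx) fun s hs => ⟨hs, mem_univ _⟩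
  obtain ⟨x, hxc, hxfix, hxuniq⟩ := exists_unique_continuousOn_Icc_fixedPoint htT.le hC1
    (fun x t => x0 + ABIntegral t0 b θ μ γ (fun s => f s (x s)) t)
    (fun x hx => continuousOn_const.add (continuousOn_ABIntegral hb hθ0 hθ1 hμ1 (hfx x hx)))
    fun x y hx hy d hd t ht => by
      rw [add_sub_add_left_eq_sub, ← ABIntegral_sub hb hθ0 hθ1 hμ1 (hfx x hx) (hfx y hy) ht]
      refine (abs_ABIntegral_le hb hθ0 hθ1 hμ1 ht fun s hs =>
        (hLip s hs _ _).trans (mul_le_mul_of_nonneg_left (hd s hs) hA)).trans_eq ?_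
      simp only [C1const_eq_mul_tsum]
      ring
  refine ⟨x, hxc, fun t ht => (hxfix ht).symm, ?_, fun y hy hyfix => hxuniq y hy fun t ht =>
    (hyfix t ht).symm⟩
  simpa using (hxfix ht0).symm

/-- Existence and uniqueness, case `μ ≠ 1`. -/
theorem existence_uniqueness_mu_ne_one
    (t0 T θ μ γ b A x0 : ℝ) (htT : t0 < T) (hθ0 : 0 < θ) (hθ1 : θ < 1)
    (hμ0 : 0 < μ) (hμ1 : μ < 1) (hγ : 0 < γ) (hb : 0 < b) (hA : 0 < A)
    (f : ℝ → ℝ → ℝ)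
    (hfc : ContinuousOn (fun p : ℝ × ℝ => f p.1 p.2) (Set.Icc t0 T ×ˢ Set.univ))
    (hLip : ∀ t ∈ Set.Icc t0 T, ∀ y1 y2 : ℝ, |f t y1 - f t y2| ≤ A * |y1 - y2|)
    (hC1 : C1const t0 T b θ μ γ A < 1) :
    ∃ x : ℝ → ℝ, ContinuousOn x (Set.Icc t0 T) ∧
      (∀ t ∈ Set.Icc t0 T, x t = x0 + ABIntegral t0 b θ μ γ (fun s => f s (x s)) t) ∧
      x t0 = x0 ∧
      (∀ y : ℝ → ℝ, ContinuousOn y (Set.Icc t0 T) →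
        (∀ t ∈ Set.Icc t0 T, y t = x0 + ABIntegral t0 b θ μ γ (fun s => f s (y s)) t) →
        ∀ t ∈ Set.Icc t0 T, y t = x t) :=
  existence_uniqueness_mu_ne_one_general t0 T θ μ γ b A x0 htT hθ0 hθ1 hμ1 hb f hfc hLip hC1
end

section
/- Let t0 < T, θ ∈ (0,1), μ > 0, γ ∈ ℝ, b > 0, λ = −θ/(1−θ), and let f : [t0,T] → ℝ be continuously differentiable. Then for every t ∈ (t0,T], (D^{θ,μ,γ}f)(t) = (R^{θ,μ,γ}f)(t) − (b/(1−θ)) f(t0) E_{θ,μ}^{γ}(λ, t − t0), i.e., the generalized ABC and ABR fractional derivatives of f differ by the Mittag-Leffler kernel weighted by the initial value f(t0). -/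
open Real MeasureTheory Set

/-!
Write `E := E_{θ,μ}^γ(λ, ·)`. Since `E z = z ^ (μ - 1) * P (z ^ θ)` for an entire power series `P`
(its coefficients are dominated by `D ^ k / Γ(kθ + μ)`, summable by the log-convexity of `Γ`),
`E` is continuous on `(0, ∞)` and integrable at `0`.

Substituting `s = u - x` and splitting off `f t0`, for `t0 ≤ u ≤ t0 + L`
`∫_{t0}^u E (u - s) f s ds = f t0 * ∫_0^{u - t0} E + ∫_0^L E x * g (u - x) dx`,
where `g` is `f - f t0` extended by `0` to the left of `t0`. The first term is differentiated by
the fundamental theorem of calculus, giving `f t0 * E (t - t0)`. The second has fixed limits and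
`g` is Lipschitz (and differentiable except at `t0`), so it is differentiated under the integral
sign; its derivative `∫_0^L E x * g' (t - x) dx` equals `∫_{t0}^t E (t - s) f' s ds`.
-/

open Filter Topology intervalIntegral
open scoped NNReal Nat

namespace Real

lemma mul_Gamma_le_Gamma_add_mul_rpow {θ x : ℝ} (hθ0 : 0 < θ) (hθ1 : θ < 1) (hx : 0 < x) :
    x * Gamma x ≤ Gamma (x + θ) * (x + θ) ^ (1 - θ) := by
  have hxθ : 0 < x + θ := by linarith
  have hG : 0 < Gamma (x + θ) := Gamma_pos_of_pos hxθ
  have hconv := Gamma_mul_add_mul_le_rpow_Gamma_mul_rpow_Gamma hxθ (by linarith : 0 < x + θ + 1)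
    hθ0 (sub_pos.2 hθ1) (add_sub_cancel θ 1)
  rwa [show θ * (x + θ) + (1 - θ) * (x + θ + 1) = x + 1 by ring, Gamma_add_one hx.ne',
    Gamma_add_one hxθ.ne', mul_rpow hxθ.le hG.le, ← mul_assoc, mul_comm _ ((x + θ) ^ (1 - θ)),
    mul_assoc, ← rpow_add hG, add_sub_cancel, rpow_one, mul_comm ((x + θ) ^ (1 - θ))] at hconv

lemma Gamma_le_mul_Gamma_add {θ x : ℝ} (hθ0 : 0 < θ) (hθ1 : θ < 1) (hx : θ ≤ x) :
    Gamma x ≤ 2 * (x + θ) ^ (-θ) * Gamma (x + θ) := by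
  have hx0 : 0 < x := hθ0.trans_le hx
  have hxθ : 0 < x + θ := by linarith
  have hG : 0 < Gamma (x + θ) := Gamma_pos_of_pos hxθ
  refine le_of_mul_le_mul_left ?_ hx0
  calc x * Gamma x ≤ Gamma (x + θ) * (x + θ) ^ (1 - θ) :=
        mul_Gamma_le_Gamma_add_mul_rpow hθ0 hθ1 hx0
    _ = Gamma (x + θ) * (x + θ) ^ (-θ) * (x + θ) := by
        rw [sub_eq_add_neg, rpow_add hxθ, rpow_one]; ring
    _ ≤ Gamma (x + θ) * (x + θ) ^ (-θ) * (2 * x) := by gcongr; linarith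
    _ = x * (2 * (x + θ) ^ (-θ) * Gamma (x + θ)) := by ring

end Real

lemma summable_pow_div_Gamma {θ μ : ℝ} (hθ0 : 0 < θ) (hθ1 : θ < 1) (hμ : 0 < μ) (D : ℝ) :
    Summable fun k : ℕ => D ^ k / Gamma (k * θ + μ) := by
  have hx : Tendsto (fun k : ℕ => k * θ + μ + θ) atTop atTop :=
    tendsto_atTop_add_const_right _ _ <| tendsto_atTop_add_const_right _ _ <|
      tendsto_natCast_atTop_atTop.atTop_mul_const hθ0
  have hsmall : Tendsto (fun k : ℕ => |D| * (2 * (k * θ + μ + θ) ^ (-θ))) atTop (𝓝 0) := by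
    simpa using ((tendsto_rpow_neg_atTop hθ0).comp hx).const_mul 2 |>.const_mul |D|
  refine summable_of_ratio_norm_eventually_le (r := 1 / 2) (by norm_num) ?_
  filter_upwards [hsmall.eventually (gt_mem_nhds (by norm_num : (0 : ℝ) < 1 / 2)),
    eventually_ge_atTop 1] with k hk hk1
  set x : ℝ := k * θ + μ
  have hxθ : ((k + 1 : ℕ) : ℝ) * θ + μ = x + θ := by push_cast; ring
  have hGx : 0 < Gamma x := Gamma_pos_of_pos (by positivity)
  have hGxθ : 0 < Gamma (x + θ) := Gamma_pos_of_pos (by positivity)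
  have hratio := Gamma_le_mul_Gamma_add hθ0 hθ1
    (show θ ≤ x by nlinarith [(Nat.one_le_cast (α := ℝ)).2 hk1])
  rw [hxθ, norm_div, norm_div, norm_pow, norm_pow, Real.norm_of_nonneg hGx.le,
    Real.norm_of_nonneg hGxθ.le, div_le_iff₀ hGxθ, pow_succ]
  calc ‖D‖ ^ k * ‖D‖ = ‖D‖ ^ k / Gamma x * (|D| * Gamma x) := by
        rw [Real.norm_eq_abs]; field_simp
    _ ≤ ‖D‖ ^ k / Gamma x * (|D| * (2 * (x + θ) ^ (-θ) * Gamma (x + θ))) := by gcongr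
    _ = ‖D‖ ^ k / Gamma x * (|D| * (2 * (x + θ) ^ (-θ)) * Gamma (x + θ)) := by ring
    _ ≤ ‖D‖ ^ k / Gamma x * (1 / 2 * Gamma (x + θ)) := by gcongr
    _ = 1 / 2 * (‖D‖ ^ k / Gamma x) * Gamma (x + θ) := by ring

lemma abs_risingFac_le (γ : ℝ) (k : ℕ) : |risingFac γ k| ≤ (1 + |γ|) ^ k * k ! := by
  rw [risingFac, Finset.abs_prod]
  calc ∏ j ∈ Finset.range k, |γ + j| ≤ ∏ j ∈ Finset.range k, (1 + |γ|) * (j + 1 : ℝ) := by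
        refine Finset.prod_le_prod (fun j _ => abs_nonneg _) fun j _ => ?_
        have hj : (0 : ℝ) ≤ j := j.cast_nonneg
        nlinarith [abs_add_le γ j, abs_of_nonneg hj, abs_nonneg γ]
    _ = (1 + |γ|) ^ k * k ! := by
        rw [Finset.prod_mul_distrib, Finset.prod_const, Finset.card_range,
          ← Finset.prod_range_add_one_eq_factorial]
        push_cast
        rfl

noncomputable def mittagLefflerCoeff (θ μ γ lam : ℝ) (k : ℕ) : ℝ :=
  lam ^ k * risingFac γ k / (Gamma (k * θ + μ) * k !)

noncomputable def mittagLefflerSeries (θ μ γ lam y : ℝ) : ℝ :=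
  ∑' k : ℕ, mittagLefflerCoeff θ μ γ lam k * y ^ k

section MittagLeffler

variable {θ μ : ℝ} (γ lam : ℝ)

lemma norm_mittagLefflerCoeff_mul_pow_le (hθ0 : 0 < θ) (hμ : 0 < μ) {y R : ℝ} (hy : |y| ≤ R)
    (k : ℕ) :
    ‖mittagLefflerCoeff θ μ γ lam k * y ^ k‖ ≤ (|lam| * (1 + |γ|) * R) ^ k / Gamma (k * θ + μ) := by
  have hG : 0 < Gamma (k * θ + μ) := Gamma_pos_of_pos (by positivity)
  have hfac : (0 : ℝ) < k ! := by exact_mod_cast k.factorial_pos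
  rw [mittagLefflerCoeff, Real.norm_eq_abs, abs_mul, abs_div, abs_mul, abs_of_pos (mul_pos hG hfac),
    abs_pow, abs_pow, mul_pow, mul_pow, div_mul_eq_mul_div, div_le_div_iff₀ (by positivity) hG]
  calc |lam| ^ k * |risingFac γ k| * |y| ^ k * Gamma (k * θ + μ)
      ≤ |lam| ^ k * ((1 + |γ|) ^ k * k !) * R ^ k * Gamma (k * θ + μ) := by
        gcongr
        · exact abs_risingFac_le γ k
    _ = |lam| ^ k * (1 + |γ|) ^ k * R ^ k * (Gamma (k * θ + μ) * k !) := by ring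

lemma continuous_mittagLefflerSeries (hθ0 : 0 < θ) (hθ1 : θ < 1) (hμ : 0 < μ) :
    Continuous (mittagLefflerSeries θ μ γ lam) := by
  refine continuous_iff_continuousAt.2 fun y => ?_
  have hy : y ∈ Metric.ball (0 : ℝ) (|y| + 1) := by simp
  refine (continuousOn_tsum (fun k => (continuous_const.mul (continuous_pow k)).continuousOn)
    (summable_pow_div_Gamma hθ0 hθ1 hμ (|lam| * (1 + |γ|) * (|y| + 1)))
    fun k z hz => norm_mittagLefflerCoeff_mul_pow_le γ lam hθ0 hμ ?_ k).continuousAt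
    (Metric.isOpen_ball.mem_nhds hy)
  simpa using (mem_ball_zero_iff.1 hz).le

lemma abs_mittagLefflerSeries_le (hθ0 : 0 < θ) (hθ1 : θ < 1) (hμ : 0 < μ) {y R : ℝ} (hy : |y| ≤ R) :
    |mittagLefflerSeries θ μ γ lam y| ≤ ∑' k : ℕ, (|lam| * (1 + |γ|) * R) ^ k / Gamma (k * θ + μ) :=
  tsum_of_norm_bounded (summable_pow_div_Gamma hθ0 hθ1 hμ _).hasSum
    (norm_mittagLefflerCoeff_mul_pow_le γ lam hθ0 hμ hy)

lemma mittagLeffler_eq_mittagLefflerSeries {z : ℝ} (hz : 0 < z) :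
    mittagLeffler θ μ γ lam z = mittagLefflerSeries θ μ γ lam (z ^ θ) * z ^ (μ - 1) := by
  rw [mittagLeffler, mittagLefflerSeries, ← tsum_mul_right]
  congr 1 with k
  rw [mittagLefflerCoeff, ← rpow_natCast (z ^ θ), ← rpow_mul hz.le, mul_comm θ, add_sub_assoc,
    rpow_add hz]
  ring

lemma continuousOn_mittagLeffler (hθ0 : 0 < θ) (hθ1 : θ < 1) (hμ : 0 < μ) :
    ContinuousOn (mittagLeffler θ μ γ lam) (Ioi 0) := by
  refine ContinuousOn.congr ?_ fun z hz => mittagLeffler_eq_mittagLefflerSeries γ lam hz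
  exact ((continuous_mittagLefflerSeries γ lam hθ0 hθ1 hμ).comp_continuousOn
    (continuousOn_id.rpow_const fun z hz => Or.inl (ne_of_gt hz))).mul
    (continuousOn_id.rpow_const fun z hz => Or.inl (ne_of_gt hz))

lemma integrableOn_mittagLeffler (hθ0 : 0 < θ) (hθ1 : θ < 1) (hμ : 0 < μ) (L : ℝ) :
    IntegrableOn (mittagLeffler θ μ γ lam) (Ioc 0 L) := by
  set K := ∑' k : ℕ, (|lam| * (1 + |γ|) * L ^ θ) ^ k / Gamma (k * θ + μ)
  have hbound : ∀ z ∈ Ioc 0 L, ‖mittagLeffler θ μ γ lam z‖ ≤ K * z ^ (μ - 1) := fun z hz => by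
    rw [mittagLeffler_eq_mittagLefflerSeries γ lam hz.1, Real.norm_eq_abs, abs_mul,
      abs_of_nonneg (rpow_nonneg hz.1.le _)]
    refine mul_le_mul_of_nonneg_right (abs_mittagLefflerSeries_le γ lam hθ0 hθ1 hμ ?_)
      (rpow_nonneg hz.1.le _)
    exact (abs_of_nonneg (rpow_nonneg hz.1.le θ)).trans_le (rpow_le_rpow hz.1.le hz.2 hθ0.le)
  refine Integrable.mono' ((intervalIntegral.intervalIntegrable_rpow'
    (by linarith : -1 < μ - 1)).1.const_mul K) ?_ ((ae_restrict_iff' measurableSet_Ioc).2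
      (ae_of_all _ hbound))
  exact ((continuousOn_mittagLeffler γ lam hθ0 hθ1 hμ).mono
    Ioc_subset_Ioi_self).aestronglyMeasurable measurableSet_Ioc

end MittagLeffler

lemma integral_comp_sub_mul_eq (E ψ : ℝ → ℝ) (a u : ℝ) :
    ∫ s in a..u, E (u - s) * ψ s = ∫ x in 0..u - a, E x * ψ (u - x) := by
  simpa using integral_comp_sub_left (fun x => E x * ψ (u - x)) u (a := a) (b := u)

lemma integral_eq_integral_of_eq_zero_on_Ioc {h : ℝ → ℝ} {a b c : ℝ} (hab : a ≤ b) (hbc : b ≤ c)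
    (hzero : ∀ x ∈ Ioc b c, h x = 0) : ∫ x in a..c, h x = ∫ x in a..b, h x := by
  rw [integral_of_le (hab.trans hbc), integral_of_le hab]
  refine setIntegral_eq_of_subset_of_forall_sdiff_eq_zero measurableSet_Ioc
    (Ioc_subset_Ioc_right hbc) fun x hx => hzero x ⟨?_, hx.1.2⟩
  exact not_le.1 fun hxb => hx.2 ⟨hx.1.1, hxb⟩

lemma integral_mul_indicator_Ici_comp_sub {E ψ : ℝ → ℝ} {t0 t L : ℝ} (ht0 : t0 ≤ t)
    (htL : t - t0 ≤ L) :
    ∫ x in 0..L, E x * (Ici t0).indicator ψ (t - x) = ∫ s in t0..t, E (t - s) * ψ s := by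
  rw [integral_comp_sub_mul_eq, integral_eq_integral_of_eq_zero_on_Ioc (sub_nonneg.2 ht0) htL]
  · refine integral_congr fun x hx => ?_
    rw [uIcc_of_le (sub_nonneg.2 ht0)] at hx
    rw [indicator_of_mem (show t - x ∈ Ici t0 by simp only [mem_Ici]; linarith [hx.2])]
  · intro x hx
    rw [indicator_of_notMem (show t - x ∉ Ici t0 by simp only [mem_Ici]; linarith [hx.1]),
      mul_zero]

lemma hasDerivAt_integral_mul_comp_sub {E g g' : ℝ → ℝ} {c b L t : ℝ} {C : ℝ≥0}
    (hE : IntegrableOn E (Ioc 0 L)) (hL : 0 ≤ L) (hg : Continuous g)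
    (hgC : LipschitzOnWith C g (Iic b)) (hg' : ∀ s ≠ c, HasDerivAt g (g' s) s)
    (hg'm : Measurable g') (htb : t < b) :
    HasDerivAt (fun u => ∫ x in 0..L, E x * g (u - x)) (∫ x in 0..L, E x * g' (t - x)) t := by
  simp only [integral_of_le hL]
  have hEm := hE.aestronglyMeasurable
  have hgu : ∀ u, Continuous fun x => g (u - x) := fun u => hg.comp (continuous_sub_left u)
  refine (_root_.hasDerivAt_integral_of_dominated_loc_of_lip (Iio_mem_nhds htb)
    (bound := fun x => ‖E x‖ * C) ?_ ?_ ?_ ?_ ?_ ?_).2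
  · exact Eventually.of_forall fun u => hEm.mul (hgu u).aestronglyMeasurable
  · rw [← integrableOn_Icc_iff_integrableOn_Ioc] at hE
    exact (hE.mul_continuousOn (hgu t).continuousOn isCompact_Icc).mono_set Ioc_subset_Icc_self
  · exact hEm.mul (hg'm.comp (measurable_const_sub t)).aestronglyMeasurable
  · filter_upwards [ae_restrict_mem measurableSet_Ioc] with x hx
    have hshift : LipschitzOnWith C (fun u => g (u - x)) (Iio b) :=
      LipschitzOnWith.of_dist_le_mul fun u hu v hv => by
        simpa [Real.dist_eq] using hgC.dist_le_mul (u - x)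
          (show u - x ≤ b by linarith [hx.1, mem_Iio.1 hu]) (v - x)
          (show v - x ≤ b by linarith [hx.1, mem_Iio.1 hv])
    rw [show Real.nnabs (‖E x‖ * C) = ‖E x‖₊ * C by ext; simp]
    exact (lipschitzWith_smul (E x)).comp_lipschitzOnWith hshift
  · exact hE.norm.mul_const _
  · filter_upwards [(countable_singleton (t - c)).ae_notMem _] with x hx
    exact ((hg' (t - x) fun h => hx (by simp [← h])).comp_sub_const t x).const_mul (E x)

noncomputable def initialIncrement (f : ℝ → ℝ) (t0 s : ℝ) : ℝ := f (max s t0) - f t0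

section InitialIncrement

variable {f : ℝ → ℝ} {t0 s : ℝ}

lemma initialIncrement_of_le (hs : s ≤ t0) : initialIncrement f t0 s = 0 := by
  simp [initialIncrement, max_eq_right hs]

lemma initialIncrement_of_ge (hs : t0 ≤ s) : initialIncrement f t0 s = f s - f t0 := by
  simp [initialIncrement, max_eq_left hs]

lemma Continuous.initialIncrement (hf : Continuous f) (t0 : ℝ) :
    Continuous (initialIncrement f t0) :=
  (hf.comp (continuous_id.max continuous_const)).sub continuous_const

lemma hasDerivAt_initialIncrement (hf : Differentiable ℝ f) (hs : s ≠ t0) :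
    HasDerivAt (initialIncrement f t0) ((Ici t0).indicator (deriv f) s) s := by
  rcases hs.lt_or_gt with hlt | hgt
  · rw [indicator_of_notMem (show s ∉ Ici t0 from not_le.2 hlt)]
    refine (hasDerivAt_const s 0).congr_of_eventuallyEq ?_
    filter_upwards [Iio_mem_nhds hlt] with y hy using initialIncrement_of_le (le_of_lt hy)
  · rw [indicator_of_mem (show s ∈ Ici t0 from le_of_lt hgt)]
    refine ((hf s).hasDerivAt.sub_const (f t0)).congr_of_eventuallyEq ?_
    filter_upwards [Ioi_mem_nhds hgt] with y hy using initialIncrement_of_ge (le_of_lt hy)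

lemma exists_lipschitzOnWith_initialIncrement (hf : ContDiff ℝ 1 f) (t0 b : ℝ) :
    ∃ C, LipschitzOnWith C (initialIncrement f t0) (Iic b) := by
  obtain ⟨C, hC⟩ := hf.contDiffOn.exists_lipschitzOnWith one_ne_zero (convex_Icc t0 (max b t0))
    isCompact_Icc
  have hmax : LipschitzOnWith 1 (fun s => max s t0) (Iic b) :=
    (LipschitzWith.id.max_const t0).lipschitzOnWith
  have hmaps : MapsTo (fun s => max s t0) (Iic b) (Icc t0 (max b t0)) :=
    fun s hs => ⟨le_max_right _ _, max_le_max_right t0 hs⟩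
  refine ⟨C, LipschitzOnWith.of_dist_le_mul fun x hx y hy => ?_⟩
  simpa [initialIncrement, Real.dist_eq] using (hC.comp hmax hmaps).dist_le_mul x hx y hy

end InitialIncrement

lemma integral_comp_sub_mul_eq_add_initialIncrement {E f : ℝ → ℝ} {t0 u L : ℝ}
    (hE : IntegrableOn E (Ioc 0 L)) (hf : Continuous f) (hu0 : t0 ≤ u) (huL : u - t0 ≤ L) :
    ∫ s in t0..u, E (u - s) * f s
      = (∫ x in 0..L, E x * initialIncrement f t0 (u - x)) + f t0 * ∫ x in 0..u - t0, E x := by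
  have hEi : IntervalIntegrable E volume 0 (u - t0) :=
    (intervalIntegrable_iff_integrableOn_Ioc_of_le (sub_nonneg.2 hu0)).2
      (hE.mono_set (Ioc_subset_Ioc_right huL))
  have hinc : ∫ x in 0..u - t0, E x * initialIncrement f t0 (u - x)
      = ∫ x in 0..u - t0, (E x * f (u - x) - E x * f t0) := by
    refine integral_congr fun x hx => ?_
    rw [uIcc_of_le (sub_nonneg.2 hu0)] at hx
    rw [initialIncrement_of_ge (by linarith [hx.2]), mul_sub]
  rw [integral_comp_sub_mul_eq, integral_eq_integral_of_eq_zero_on_Ioc (sub_nonneg.2 hu0) huL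
      (fun x hx => by rw [initialIncrement_of_le (by linarith [hx.1]), mul_zero]), hinc,
    integral_sub (hEi.mul_continuousOn (g := fun x => f (u - x))
      (hf.comp (continuous_sub_left u)).continuousOn) (hEi.mul_const _),
    intervalIntegral.integral_mul_const]
  ring

theorem hasDerivAt_integral_comp_sub_mul {E f : ℝ → ℝ} {t0 t L : ℝ}
    (hE : IntegrableOn E (Ioc 0 L)) (hEt : ContinuousAt E (t - t0))
    (hf : ContDiff ℝ 1 f) (ht0 : t0 < t) (htL : t - t0 < L) :
    HasDerivAt (fun u => ∫ s in t0..u, E (u - s) * f s)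
      ((∫ s in t0..t, E (t - s) * deriv f s) + f t0 * E (t - t0)) t := by
  obtain ⟨C, hC⟩ := exists_lipschitzOnWith_initialIncrement hf t0 (t0 + L)
  have hInc := hasDerivAt_integral_mul_comp_sub hE (by linarith) (hf.continuous.initialIncrement t0)
    hC (fun s hs => hasDerivAt_initialIncrement (hf.differentiable one_ne_zero) hs)
    ((hf.continuous_deriv le_rfl).measurable.indicator measurableSet_Ici)
    (by linarith : t < t0 + L)
  have hEi : IntervalIntegrable E volume 0 (t - t0) :=
    (intervalIntegrable_iff_integrableOn_Ioc_of_le (by linarith)).2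
      (hE.mono_set (Ioc_subset_Ioc_right htL.le))
  have hEm : StronglyMeasurableAtFilter E (𝓝 (t - t0)) :=
    ⟨Ioo 0 L, Ioo_mem_nhds (by linarith) htL,
      (hE.mono_set Ioo_subset_Ioc_self).aestronglyMeasurable⟩
  have hPrim : HasDerivAt (fun u => ∫ x in 0..u - t0, E x) (E (t - t0)) t :=
    (integral_hasDerivAt_right hEi hEm hEt).comp_sub_const t t0
  rw [← integral_mul_indicator_Ici_comp_sub ht0.le htL.le]
  refine (hInc.add (hPrim.const_mul (f t0))).congr_of_eventuallyEq ?_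
  filter_upwards [Ioo_mem_nhds ht0 (by linarith : t < t0 + L)] with u hu
  dsimp only [Pi.add_apply]
  exact integral_comp_sub_mul_eq_add_initialIncrement hE hf.continuous hu.1.le (by linarith [hu.2])

theorem abc_deriv_eq_abr_deriv_sub_general
    (t0 T θ μ γ b : ℝ) (hθ0 : 0 < θ) (hθ1 : θ < 1)
    (hμ : 0 < μ)
    (f : ℝ → ℝ) (hf : ContDiff ℝ 1 f) :
    ∀ t ∈ Set.Ioc t0 T,
      ABCDeriv t0 b θ μ γ f t =
        ABRDeriv t0 b θ μ γ f t -
          (b / (1 - θ)) * f t0 * mittagLeffler θ μ γ (-θ / (1 - θ)) (t - t0) := by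
  intro t ht
  have hE := integrableOn_mittagLeffler γ (-θ / (1 - θ)) hθ0 hθ1 hμ (t - t0 + 1)
  have hEt := (continuousOn_mittagLeffler γ (-θ / (1 - θ)) hθ0 hθ1 hμ).continuousAt
    (Ioi_mem_nhds (sub_pos.2 ht.1))
  rw [ABCDeriv, ABRDeriv, (hasDerivAt_integral_comp_sub_mul hE hEt hf ht.1 (lt_add_one _)).deriv]
  ring

/-- Relation between the generalized ABC and ABR derivatives. -/
theorem abc_deriv_eq_abr_deriv_sub
    (t0 T θ μ γ b : ℝ) (htT : t0 < T) (hθ0 : 0 < θ) (hθ1 : θ < 1)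
    (hμ : 0 < μ) (hb : 0 < b)
    (f : ℝ → ℝ) (hf : ContDiff ℝ 1 f) :
    ∀ t ∈ Set.Ioc t0 T,
      ABCDeriv t0 b θ μ γ f t =
        ABRDeriv t0 b θ μ γ f t -
          (b / (1 - θ)) * f t0 * mittagLeffler θ μ γ (-θ / (1 - θ)) (t - t0) :=
  abc_deriv_eq_abr_deriv_sub_general t0 T θ μ γ b hθ0 hθ1 hμ f hf
end
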